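/- There exists a constant C = C(m, C0) such that for all integers 0 ≤ L ≤ L_n and 0 ≤ K < 2^L: ess sup_{x∈[0,1]} |ψ_{LK}(x)/M0(x) − P_{L_n}(ψ_{LK}/M0)(x)| ≤ C·2^{L/2}·2^{−L_n}. -/

import Mathlib

open MeasureTheory Real Set

noncomputable section

/-- The Haar mother wavelet `ψ = 1_{(0,1/2]} − 1_{(1/2,1]}`. -/
def haarMother (x : ℝ) : ℝ :=
  (Set.Ioc (0:ℝ) (1/2)).indicator (fun _ => (1:ℝ)) x
    - (Set.Ioc (1/2:ℝ) 1).indicator (fun _ => (1:ℝ)) x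

/-- The Haar wavelet `ψ_{lk}(x) = 2^{l/2} ψ(2^l x − k)`. -/
def haarPsi (l k : ℕ) (x : ℝ) : ℝ :=
  (2:ℝ) ^ ((l:ℝ) / 2) * haarMother ((2:ℝ) ^ l * x - k)

/-- The dyadic interval `I^l_k = (k 2^{−l}, (k+1) 2^{−l}]`. -/
def dyadicI (l k : ℕ) : Set ℝ := Set.Ioc ((k:ℝ) / 2 ^ l) (((k:ℝ) + 1) / 2 ^ l)

/-- `f ∈ V_L`: `f` is constant on each dyadic interval `I^{L+1}_j`, `0 ≤ j < 2^{L+1}`. -/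
def MemV (L : ℕ) (f : ℝ → ℝ) : Prop :=
  ∀ j < 2 ^ (L + 1), ∀ x ∈ dyadicI (L + 1) j, ∀ y ∈ dyadicI (L + 1) j, f x = f y

/-- The `L²`-orthogonal projection onto `V_L`: on each dyadic interval `I^{L+1}_j`,
`(P_L f)(x)` is the average `2^{L+1} ∫_{I^{L+1}_j} f`. -/
def dyadicProj (L : ℕ) (f : ℝ → ℝ) (x : ℝ) : ℝ :=
  (2:ℝ) ^ (L + 1) *
    ∫ t in (((⌈(2:ℝ) ^ (L + 1) * x⌉ - 1 : ℤ) : ℝ) / 2 ^ (L + 1))..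
        (((⌈(2:ℝ) ^ (L + 1) * x⌉ : ℤ) : ℝ) / 2 ^ (L + 1)), f t

/-- The multiscale metric
`ℓ∞(f,g) = |⟨f−g, φ⟩| + Σ_{l≥0} 2^{l/2} max_{0≤k<2^l} |⟨f−g, ψ_{lk}⟩|`. -/
def ellInfinity (f g : ℝ → ℝ) : ℝ :=
  |∫ x in (0:ℝ)..1, (f x - g x)| +
    ∑' l : ℕ, (2:ℝ) ^ ((l:ℝ) / 2) *
      ⨆ k : Fin (2 ^ l), |∫ x in (0:ℝ)..1, (f x - g x) * haarPsi l k x|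

/-- The Hölder ball `H(β,D)` on `[0,1]` (for `0 < β ≤ 1`). -/
def HolderC (β D : ℝ) (f : ℝ → ℝ) : Prop :=
  ∀ x ∈ Set.Icc (0:ℝ) 1, ∀ y ∈ Set.Icc (0:ℝ) 1, |f x - f y| ≤ D * |x - y| ^ β

open scoped NNReal Interval

/-! On the dyadic cell of level `L_n + 1` containing `x`, `ψ_{LK}` is constant (as `L ≤ L_n`), so
`P_{L_n}(ψ_{LK}/M0)(x)` is `ψ_{LK}(x)` times the average of `1/M0` over that cell. The error is thus
`|ψ_{LK}(x)| ≤ 2^{L/2}` times the deviation of the `C0`-Lipschitz function `1/M0` from its average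
over a cell of length `2^{-(L_n+1)}`. -/

theorem mem_Ioc_div_iff_ceil_mul_eq {c : ℝ} (hc : 0 < c) (j : ℤ) (t : ℝ) :
    t ∈ Ioc (((j:ℝ) - 1) / c) (j / c) ↔ ⌈c * t⌉ = j := by
  rw [Int.ceil_eq_iff, mem_Ioc, div_lt_iff₀' hc, le_div_iff₀' hc]

theorem mem_Ioc_ceil_mul_div {c : ℝ} (hc : 0 < c) (x : ℝ) :
    x ∈ Ioc (((⌈c * x⌉ : ℝ) - 1) / c) (⌈c * x⌉ / c) :=
  (mem_Ioc_div_iff_ceil_mul_eq hc _ x).2 rfl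

theorem ceil_div_natCast_eq_of_ceil_eq {y z : ℝ} (h : ⌈y⌉ = ⌈z⌉) (n : ℕ) :
    ⌈y / n⌉ = ⌈z / n⌉ := by
  have hceil_div : ∀ w : ℝ, ⌈w / n⌉ = -((-⌈w⌉) / n) := fun w => by
    rw [← Int.floor_neg, ← Int.floor_div_natCast, neg_div, Int.floor_neg, neg_neg]
  rw [hceil_div, hceil_div, h]

/-- `⌈2^N x⌉ = j` says that `x` lies in the dyadic cell `I^N_{j-1}`; cells of level `N'` refine
those of every level `N ≤ N'`. -/
theorem ceil_two_pow_mul_eq_of_le {N N' : ℕ} (hN : N ≤ N') {t x : ℝ}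
    (h : ⌈(2:ℝ) ^ N' * t⌉ = ⌈(2:ℝ) ^ N' * x⌉) : ⌈(2:ℝ) ^ N * t⌉ = ⌈(2:ℝ) ^ N * x⌉ := by
  have hsplit : ∀ w : ℝ, (2:ℝ) ^ N * w = (2:ℝ) ^ N' * w / ((2 ^ (N' - N) : ℕ) : ℝ) := fun w => by
    rw [Nat.cast_pow, Nat.cast_ofNat, ← Nat.add_sub_of_le hN, pow_add, Nat.add_sub_cancel_left]
    field_simp
  rw [hsplit, hsplit, ceil_div_natCast_eq_of_ceil_eq h]

theorem haarMother_eq_of_ceil_eq {u v : ℝ} (h : ⌈2 * u⌉ = ⌈2 * v⌉) :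
    haarMother u = haarMother v := by
  have hleft : ∀ w : ℝ, w ∈ Ioc (0:ℝ) (1/2) ↔ ⌈2 * w⌉ = 1 := fun w => by
    simpa using mem_Ioc_div_iff_ceil_mul_eq two_pos 1 w
  have hright : ∀ w : ℝ, w ∈ Ioc (1/2:ℝ) 1 ↔ ⌈2 * w⌉ = 2 := fun w => by
    convert mem_Ioc_div_iff_ceil_mul_eq two_pos 2 w using 2; norm_num
  simp only [haarMother, indicator_apply, hleft, hright, h]

theorem haarPsi_eq_of_ceil_eq (l k : ℕ) {t x : ℝ}
    (h : ⌈(2:ℝ) ^ (l + 1) * t⌉ = ⌈(2:ℝ) ^ (l + 1) * x⌉) : haarPsi l k t = haarPsi l k x := by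
  have hscale : ∀ w : ℝ, 2 * ((2:ℝ) ^ l * w - k) = (2:ℝ) ^ (l + 1) * w - ((2 * k : ℤ) : ℝ) :=
    fun w => by push_cast; ring
  rw [haarPsi, haarPsi, haarMother_eq_of_ceil_eq]
  rw [hscale, hscale, Int.ceil_sub_intCast, Int.ceil_sub_intCast, h]

theorem abs_haarPsi_le (l k : ℕ) (x : ℝ) : |haarPsi l k x| ≤ (2:ℝ) ^ ((l:ℝ) / 2) := by
  have hmother : |haarMother ((2:ℝ) ^ l * x - k)| ≤ 1 := by
    simp only [haarMother, indicator_apply]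
    split_ifs <;> norm_num
  rw [haarPsi, abs_mul, abs_of_pos (by positivity)]
  exact mul_le_of_le_one_right (by positivity) hmother

theorem abs_sub_intervalAverage_le_of_lipschitzOnWith {g : ℝ → ℝ} {K : ℝ≥0} {s : Set ℝ}
    (hg : LipschitzOnWith K g s) {a b x : ℝ} (hab : a < b) (hs : Icc a b ⊆ s)
    (hx : x ∈ Icc a b) : |g x - (b - a)⁻¹ * ∫ t in a..b, g t| ≤ K * (b - a) := by
  have hba : 0 < b - a := sub_pos.2 hab
  have hint : IntervalIntegrable g volume a b :=
    ((hg.continuousOn.mono hs).intervalIntegrable_of_Icc hab.le)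
  have hdiff : g x - (b - a)⁻¹ * ∫ t in a..b, g t = (b - a)⁻¹ * ∫ t in a..b, (g x - g t) := by
    rw [intervalIntegral.integral_sub intervalIntegrable_const hint,
      intervalIntegral.integral_const, smul_eq_mul]
    field_simp
  have hbound : ∀ t ∈ Ι a b, ‖g x - g t‖ ≤ K * (b - a) := fun t ht => by
    rw [uIoc_of_le hab.le] at ht
    calc ‖g x - g t‖ ≤ K * dist x t := hg.dist_le_mul x (hs hx) t (hs (Ioc_subset_Icc_self ht))
      _ ≤ K * (b - a) := by
        gcongr
        rw [Real.dist_eq, abs_le]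
        constructor <;> linarith [hx.1, hx.2, ht.1, ht.2]
  have := intervalIntegral.norm_integral_le_of_norm_le_const hbound
  rw [Real.norm_eq_abs, abs_of_pos hba] at this
  rw [hdiff, abs_mul, abs_inv, abs_of_pos hba]
  calc (b - a)⁻¹ * |∫ t in a..b, (g x - g t)| ≤ (b - a)⁻¹ * (K * (b - a) * (b - a)) := by
        gcongr
    _ = K * (b - a) := by field_simp

theorem abs_mul_sub_dyadicProj_le {f g : ℝ → ℝ} {K : ℝ≥0} (L : ℕ)
    (hg : LipschitzOnWith K g (Icc 0 1)) {x : ℝ} (hx : x ∈ Ioc 0 1)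
    (hf : ∀ t, ⌈(2:ℝ) ^ (L + 1) * t⌉ = ⌈(2:ℝ) ^ (L + 1) * x⌉ → f t = f x) :
    |f x * g x - dyadicProj L (fun t => f t * g t) x| ≤ |f x| * (K / 2 ^ (L + 1)) := by
  set c : ℝ := 2 ^ (L + 1) with hc_def
  have hc : 0 < c := by positivity
  set j := ⌈c * x⌉ with hj
  set a : ℝ := ((j:ℝ) - 1) / c
  set b : ℝ := (j:ℝ) / c
  have hba : b - a = c⁻¹ := by
    show (j:ℝ) / c - ((j:ℝ) - 1) / c = c⁻¹
    field_simp; ring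
  have hab : a < b := by linarith [inv_pos.2 hc]
  have hxab : x ∈ Ioc a b := mem_Ioc_ceil_mul_div hc x
  have hsub : Icc a b ⊆ Icc 0 1 := by
    have hj1 : (1:ℝ) ≤ j := by exact_mod_cast Int.one_le_ceil_iff.2 (mul_pos hc hx.1)
    have hjc : (j:ℝ) ≤ c := by
      have hj2 : j ≤ 2 ^ (L + 1) := Int.ceil_le.2 (by push_cast; nlinarith [hx.2])
      have := (Int.cast_le (R := ℝ)).2 hj2
      push_cast at this
      exact this
    exact Icc_subset_Icc (div_nonneg (by linarith) hc.le) ((div_le_one hc).2 hjc)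
  have hproj : dyadicProj L (fun t => f t * g t) x = c * (f x * ∫ t in a..b, g t) := by
    simp only [dyadicProj, ← hc_def, ← hj, Int.cast_sub, Int.cast_one]
    rw [intervalIntegral.integral_of_le hab.le, intervalIntegral.integral_of_le hab.le]
    congr 1
    rw [← integral_const_mul]
    refine setIntegral_congr_fun measurableSet_Ioc fun t ht => ?_
    rw [hf t ((mem_Ioc_div_iff_ceil_mul_eq hc j t).1 ht)]
  have haverage := abs_sub_intervalAverage_le_of_lipschitzOnWith hg hab hsub
    (Ioc_subset_Icc_self hxab)
  rw [hba, inv_inv] at haverage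
  calc |f x * g x - dyadicProj L (fun t => f t * g t) x|
      = |f x| * |g x - c * ∫ t in a..b, g t| := by rw [hproj, ← abs_mul]; ring_nf
    _ ≤ |f x| * (K / c) := by rw [div_eq_mul_inv]; gcongr

theorem essSup_le_of_forall_mem_le {α : Type*} [MeasurableSpace α] {μ : Measure α} {s : Set α}
    (hs : MeasurableSet s) (hμs : μ s ≠ 0) {f : α → ℝ} (hf0 : 0 ≤ f) {c : ℝ}
    (hf : ∀ x ∈ s, f x ≤ c) : essSup f (μ.restrict s) ≤ c := by
  have : (ae (μ.restrict s)).NeBot := ae_restrict_neBot.2 hμs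
  exact essSup_le_of_ae_le c ((ae_restrict_iff' hs).2 (ae_of_all _ hf))
    (Filter.isCoboundedUnder_le_of_le _ hf0)

theorem proj_error_psiLK_div_M0_general
    (m C0 : ℝ) (hC0 : 0 < C0) :
    ∃ C : ℝ, 0 < C ∧
      ∀ M0 : ℝ → ℝ, Measurable M0 →
        (∀ u ∈ Set.Icc (0:ℝ) 1, m ≤ M0 u ∧ M0 u ≤ 1) →
        LipschitzOnWith (Real.toNNReal C0) (fun u => 1 / M0 u) (Set.Icc 0 1) →
        ∀ Ln L K : ℕ, L ≤ Ln → K < 2 ^ L →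
          essSup
              (fun x => |haarPsi L K x / M0 x
                - dyadicProj Ln (fun t => haarPsi L K t / M0 t) x|)
              (volume.restrict (Set.Ioc (0:ℝ) 1))
            ≤ C * (2:ℝ) ^ ((L:ℝ) / 2) * (2:ℝ) ^ (-(Ln:ℝ)) := by
  refine ⟨C0, hC0, fun M0 _ _ hlip Ln L K hL _ => ?_⟩
  refine essSup_le_of_forall_mem_le measurableSet_Ioc (by simp) (fun _ => abs_nonneg _)
    fun x hx => ?_
  have hpow : (2:ℝ) ^ (-(Ln:ℝ)) = 2 / 2 ^ (Ln + 1) := by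
    rw [rpow_neg zero_le_two, rpow_natCast, pow_succ]; field_simp
  simp only [div_eq_mul_one_div (haarPsi L K _)]
  calc _ ≤ |haarPsi L K x| * (C0.toNNReal / 2 ^ (Ln + 1)) :=
        abs_mul_sub_dyadicProj_le Ln hlip hx fun t ht =>
          haarPsi_eq_of_ceil_eq L K (ceil_two_pow_mul_eq_of_le (by omega) ht)
    _ ≤ (2:ℝ) ^ ((L:ℝ) / 2) * (C0 / 2 ^ (Ln + 1)) := by
        rw [coe_toNNReal C0 hC0.le]; gcongr; exact abs_haarPsi_le L K x
    _ ≤ C0 * (2:ℝ) ^ ((L:ℝ) / 2) * (2:ℝ) ^ (-(Ln:ℝ)) := by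
        have hnonneg : 0 ≤ (2:ℝ) ^ ((L:ℝ) / 2) * (C0 / 2 ^ (Ln + 1)) := by positivity
        rw [hpow]
        linarith [show C0 * (2:ℝ) ^ ((L:ℝ) / 2) * (2 / 2 ^ (Ln + 1))
          = 2 * ((2:ℝ) ^ ((L:ℝ) / 2) * (C0 / 2 ^ (Ln + 1))) by ring]

/-- Projection error for `ψ_{LK}/M0`: for `L ≤ L_n`,
`‖ψ_{LK}/M0 − P_{L_n}(ψ_{LK}/M0)‖_∞ ≤ C 2^{L/2} 2^{−L_n}` on `[0,1]`, with `C` depending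
only on the lower bound `m` of `M0` and the Lipschitz constant `C0` of `1/M0`. -/
theorem proj_error_psiLK_div_M0
    (m C0 : ℝ) (hm : 0 < m) (hC0 : 0 < C0) :
    ∃ C : ℝ, 0 < C ∧
      ∀ M0 : ℝ → ℝ, Measurable M0 →
        (∀ u ∈ Set.Icc (0:ℝ) 1, m ≤ M0 u ∧ M0 u ≤ 1) →
        LipschitzOnWith (Real.toNNReal C0) (fun u => 1 / M0 u) (Set.Icc 0 1) →
        ∀ Ln L K : ℕ, L ≤ Ln → K < 2 ^ L →
          essSup
              (fun x => |haarPsi L K x / M0 x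
                - dyadicProj Ln (fun t => haarPsi L K t / M0 t) x|)
              (volume.restrict (Set.Ioc (0:ℝ) 1))
            ≤ C * (2:ℝ) ^ ((L:ℝ) / 2) * (2:ℝ) ^ (-(Ln:ℝ)) :=
  proj_error_psiLK_div_M0_general m C0 hC0
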